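/- No probabilistic finite state transducer computes the relation R₃ = {(0^m 1^n 2^k, 3^m) : n≠k and (m=k or m=n)} ⊆ {0,1,2}*×{3}* with probability bounded away from 1/2, i.e., there is no pfst T and no φ>1/2 such that T computes R₃ with probability φ. -/

import Mathlib

/-!  Probabilistic finite state transducers (pfst), following
Freivalds & Winter, "Quantum Finite State Transducers". -/

section PFSTdefs

variable {Q Γ₁ Γ₂ : Type*}

/-- A probabilistic finite state transducer: a finite state set `Q`, input
alphabet `Γ₁` (with implicit begin/end markers `‡`,`$`), output alphabet `Γ₂`,
row-stochastic transition matrices for every letter and for the two markers,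
output functions, an initial state, and disjoint sets of accepting and
rejecting states.  The end-marker matrix carries all probability from
non-halting states into `acc ∪ rej`. -/
structure PFST (Q Γ₁ Γ₂ : Type*) [Fintype Q] [DecidableEq Q] where
  V : Γ₁ → Matrix Q Q ℝ
  Vbeg : Matrix Q Q ℝ
  Vend : Matrix Q Q ℝ
  out : Γ₁ → Q → List Γ₂
  outBeg : Q → List Γ₂
  outEnd : Q → List Γ₂
  init : Q
  acc : Finset Q
  rej : Finset Q
  acc_disj_rej : Disjoint acc rej
  nonneg : ∀ a q p, 0 ≤ V a q p
  nonnegBeg : ∀ q p, 0 ≤ Vbeg q p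
  nonnegEnd : ∀ q p, 0 ≤ Vend q p
  stochastic : ∀ a q, ∑ p, V a q p = 1
  stochasticBeg : ∀ q, ∑ p, Vbeg q p = 1
  stochasticEnd : ∀ q, ∑ p, Vend q p = 1
  endHalts : ∀ q, q ∉ acc → q ∉ rej → ∀ p, p ∉ acc → p ∉ rej → Vend q p = 0

variable [DecidableEq Γ₂]

/-- Probability that, starting from the (non-halting) state `q`, reading the
remaining list of computation steps (each step being a transition matrix
together with an output function), the machine eventually halts in an
accepting state having produced in total exactly the output word `w`.
In each step, being in state `q`, the word `s.2 q` is appended to the output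
tape and the state moves to `p` with probability `s.1 q p`; the computation
halts as soon as an accepting or rejecting state is entered. -/
def pAccAux (acc non : Finset Q) :
    List (Matrix Q Q ℝ × (Q → List Γ₂)) → Q → List Γ₂ → ℝ
  | [], _, _ => 0
  | s :: rest, q, w =>
      if s.2 q <+: w then
        (∑ p ∈ acc, s.1 q p) * (if w.drop (s.2 q).length = [] then 1 else 0)
          + ∑ p ∈ non, s.1 q p * pAccAux acc non rest p (w.drop (s.2 q).length)
      else 0

variable [Fintype Q] [DecidableEq Q]

/-- The list of computation steps on input `‡ v $`. -/
def PFST.steps (T : PFST Q Γ₁ Γ₂) (v : List Γ₁) :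
    List (Matrix Q Q ℝ × (Q → List Γ₂)) :=
  (T.Vbeg, T.outBeg) :: (v.map fun a => (T.V a, T.out a)) ++ [(T.Vend, T.outEnd)]

/-- `T.prob v w` : the probability that on input `‡ v $` the transducer halts
accepting, with exactly `w` written on the output tape. -/
def PFST.prob (T : PFST Q Γ₁ Γ₂) (v : List Γ₁) (w : List Γ₂) : ℝ :=
  pAccAux T.acc (Finset.univ \ (T.acc ∪ T.rej)) (T.steps v) T.init w

/-- `T` computes the relation `R` with probability `α`. -/
def PFST.Computes (T : PFST Q Γ₁ Γ₂) (R : Set (List Γ₁ × List Γ₂)) (α : ℝ) : Prop :=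
  ∀ v w, ((v, w) ∈ R → α ≤ T.prob v w) ∧ ((v, w) ∉ R → T.prob v w ≤ 1 - α)

/-- `T` computes the relation `R` with isolated cutpoint `α`. -/
def PFST.ComputesCutpoint (T : PFST Q Γ₁ Γ₂) (R : Set (List Γ₁ × List Γ₂)) (α : ℝ) : Prop :=
  ∃ ε > 0, ∀ v w, ((v, w) ∈ R → α + ε ≤ T.prob v w) ∧ ((v, w) ∉ R → T.prob v w ≤ α - ε)

/-- A deterministic finite state transducer: all transition probabilities
are `0` or `1`. -/
def PFST.IsDeterministic (T : PFST Q Γ₁ Γ₂) : Prop :=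
  (∀ a q p, T.V a q p = 0 ∨ T.V a q p = 1) ∧
  (∀ q p, T.Vbeg q p = 0 ∨ T.Vbeg q p = 1) ∧
  (∀ q p, T.Vend q p = 0 ∨ T.Vend q p = 1)

end PFSTdefs

/-- The relation `R₃ = {(0^m 1^n 2^k, 3^m) : n ≠ k ∧ (m = k ∨ m = n)}`
`⊆ {0,1,2}* × {3}*` (the output symbol `3` being represented inside `Fin 4`). -/
def R₃ : Set (List (Fin 3) × List (Fin 4)) :=
  {p | ∃ m n k : ℕ, n ≠ k ∧ (m = k ∨ m = n) ∧
    p.1 = List.replicate m 0 ++ List.replicate n 1 ++ List.replicate k 2 ∧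
    p.2 = List.replicate m 3}

section NoPfstAux

open Finset

variable {Q : Type*} [Fintype Q] [DecidableEq Q]

private lemma sum_range_shift (f : ℕ → ℝ) (ℓ N : ℕ) :
    ∑ j ∈ Finset.range N, (if ℓ ≤ j then f (j - ℓ) else 0)
      = ∑ j ∈ Finset.range (N - ℓ), f j := by
  induction N with
  | zero => simp
  | succ N ih =>
    rw [Finset.sum_range_succ, ih]
    by_cases h : ℓ ≤ N
    · rw [if_pos h, show N + 1 - ℓ = (N - ℓ) + 1 from by omega, Finset.sum_range_succ]
    · rw [if_neg h, show N + 1 - ℓ = N - ℓ from by omega, add_zero]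

/-- A list of computation steps consisting of row-stochastic nonnegative matrices. -/
def GoodL (L : List (Matrix Q Q ℝ × (Q → List (Fin 4)))) : Prop :=
  ∀ s ∈ L, (∀ q p, 0 ≤ s.1 q p) ∧ (∀ q, ∑ p, s.1 q p = 1)

lemma goodL_head {s : Matrix Q Q ℝ × (Q → List (Fin 4))}
    {L : List (Matrix Q Q ℝ × (Q → List (Fin 4)))} (h : GoodL (s :: L)) :
    (∀ q p, 0 ≤ s.1 q p) ∧ (∀ q, ∑ p, s.1 q p = 1) := h s List.mem_cons_self

lemma goodL_tail {s : Matrix Q Q ℝ × (Q → List (Fin 4))}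
    {L : List (Matrix Q Q ℝ × (Q → List (Fin 4)))} (h : GoodL (s :: L)) :
    GoodL L := fun t ht => h t (List.mem_cons_of_mem _ ht)

lemma pAccAux_nonneg (acc non : Finset Q)
    (L : List (Matrix Q Q ℝ × (Q → List (Fin 4)))) (hL : GoodL L) :
    ∀ q w, 0 ≤ pAccAux acc non L q w := by
  induction L with
  | nil => intro q w; simp [pAccAux]
  | cons s L ih =>
    intro q w
    simp only [pAccAux]
    split
    · refine add_nonneg (mul_nonneg (Finset.sum_nonneg fun p _ => (goodL_head hL).1 q p) ?_)
        (Finset.sum_nonneg fun p _ => mul_nonneg ((goodL_head hL).1 q p)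
          (ih (goodL_tail hL) p _))
      split <;> norm_num
    · exact le_rfl

lemma pAccAux_le_one (acc non : Finset Q) (hd : Disjoint acc non)
    (L : List (Matrix Q Q ℝ × (Q → List (Fin 4)))) (hL : GoodL L) :
    ∀ q w, pAccAux acc non L q w ≤ 1 := by
  induction L with
  | nil => intro q w; simp [pAccAux]
  | cons s L ih =>
    intro q w
    simp only [pAccAux]
    split
    · have h1 : (∑ p ∈ acc, s.1 q p) * (if w.drop (s.2 q).length = [] then (1:ℝ) else 0)
          ≤ ∑ p ∈ acc, s.1 q p := by
        apply mul_le_of_le_one_right (Finset.sum_nonneg fun p _ => (goodL_head hL).1 q p)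
        split <;> norm_num
      have h2 : ∑ p ∈ non, s.1 q p * pAccAux acc non L p (w.drop (s.2 q).length)
          ≤ ∑ p ∈ non, s.1 q p := by
        apply Finset.sum_le_sum; intro p _
        exact mul_le_of_le_one_right ((goodL_head hL).1 q p) (ih (goodL_tail hL) p _)
      calc _ ≤ (∑ p ∈ acc, s.1 q p) + ∑ p ∈ non, s.1 q p := add_le_add h1 h2
        _ = ∑ p ∈ acc ∪ non, s.1 q p := (Finset.sum_union hd).symm
        _ ≤ ∑ p, s.1 q p := Finset.sum_le_sum_of_subset_of_nonneg (Finset.subset_univ _)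
            (fun p _ _ => (goodL_head hL).1 q p)
        _ = 1 := (goodL_head hL).2 q
    · norm_num

/-- `alive non L q p j` : the probability, starting in `q` and reading the steps `L`,
of staying inside `non` throughout, ending in `p`, having written exactly `j` copies
of the symbol `3`. -/
def alive (non : Finset Q) : List (Matrix Q Q ℝ × (Q → List (Fin 4))) → Q → Q → ℕ → ℝ
  | [], q, p, j => if p = q ∧ j = 0 then 1 else 0
  | s :: L, q, p, j =>
      if s.2 q = List.replicate (s.2 q).length 3 ∧ (s.2 q).length ≤ j then
        ∑ p' ∈ non, s.1 q p' * alive non L p' p (j - (s.2 q).length)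
      else 0

lemma alive_nonneg (non : Finset Q)
    (L : List (Matrix Q Q ℝ × (Q → List (Fin 4)))) (hL : GoodL L) :
    ∀ q p j, 0 ≤ alive non L q p j := by
  induction L with
  | nil => intro q p j; simp only [alive]; split <;> norm_num
  | cons s L ih =>
    intro q p j
    simp only [alive]
    split
    · exact Finset.sum_nonneg fun p' _ => mul_nonneg ((goodL_head hL).1 q p')
        (ih (goodL_tail hL) p' p _)
    · exact le_rfl

lemma alive_le_one (non : Finset Q)
    (L : List (Matrix Q Q ℝ × (Q → List (Fin 4)))) (hL : GoodL L) :
    ∀ q p j, alive non L q p j ≤ 1 := by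
  induction L with
  | nil => intro q p j; simp only [alive]; split <;> norm_num
  | cons s L ih =>
    intro q p j
    simp only [alive]
    split
    · calc ∑ p' ∈ non, s.1 q p' * alive non L p' p (j - (s.2 q).length)
          ≤ ∑ p' ∈ non, s.1 q p' := Finset.sum_le_sum fun p' _ =>
            mul_le_of_le_one_right ((goodL_head hL).1 q p') (ih (goodL_tail hL) p' p _)
        _ ≤ ∑ p', s.1 q p' := Finset.sum_le_sum_of_subset_of_nonneg (Finset.subset_univ _)
            (fun p' _ _ => (goodL_head hL).1 q p')
        _ = 1 := (goodL_head hL).2 q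
    · norm_num

lemma alive_mass (non : Finset Q)
    (L : List (Matrix Q Q ℝ × (Q → List (Fin 4)))) (hL : GoodL L) :
    ∀ q N, (∑ p ∈ non, ∑ j ∈ Finset.range N, alive non L q p j) ≤ 1 := by
  induction L with
  | nil =>
    intro q N
    calc ∑ p ∈ non, ∑ j ∈ Finset.range N, alive non [] q p j
        ≤ ∑ p ∈ non, (if p = q then (1:ℝ) else 0) := by
          apply Finset.sum_le_sum
          intro p _
          simp only [alive]
          by_cases hpq : p = q
          · rw [if_pos hpq]
            have hco : ∀ j, (if p = q ∧ j = 0 then (1:ℝ) else 0) = if j = 0 then 1 else 0 := by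
              intro j; by_cases hj : j = 0 <;> simp [hpq, hj]
            rw [Finset.sum_congr rfl fun j _ => hco j,
              Finset.sum_ite_eq' (Finset.range N) 0 (fun _ => (1:ℝ))]
            split <;> norm_num
          · rw [if_neg hpq, Finset.sum_congr rfl fun j _ => if_neg (fun hc => hpq hc.1)]
            simp
      _ ≤ ∑ p, (if p = q then (1:ℝ) else 0) := Finset.sum_le_sum_of_subset_of_nonneg
          (Finset.subset_univ _) (by intro p _ _; split <;> norm_num)
      _ = 1 := by rw [Finset.sum_ite_eq' Finset.univ q fun _ => (1:ℝ)]; simp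
  | cons s L ih =>
    intro q N
    simp only [alive]
    by_cases h3 : s.2 q = List.replicate (s.2 q).length 3
    · have hcongr : ∀ p, (∑ j ∈ Finset.range N,
          if s.2 q = List.replicate (s.2 q).length 3 ∧ (s.2 q).length ≤ j then
            ∑ p' ∈ non, s.1 q p' * alive non L p' p (j - (s.2 q).length) else 0)
          = ∑ j ∈ Finset.range (N - (s.2 q).length),
              ∑ p' ∈ non, s.1 q p' * alive non L p' p j := by
        intro p
        rw [← sum_range_shift (fun t => ∑ p' ∈ non, s.1 q p' * alive non L p' p t)
          (s.2 q).length N]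
        apply Finset.sum_congr rfl
        intro j _
        by_cases hj : (s.2 q).length ≤ j
        · rw [if_pos ⟨h3, hj⟩, if_pos hj]
        · rw [if_neg (fun hc => hj hc.2), if_neg hj]
      rw [Finset.sum_congr rfl fun p _ => hcongr p]
      rw [Finset.sum_congr rfl fun p (_ : p ∈ non) =>
        (Finset.sum_comm (s := Finset.range (N - (s.2 q).length)) (t := non)
          (f := fun j p' => s.1 q p' * alive non L p' p j)), Finset.sum_comm]
      calc ∑ p' ∈ non, ∑ p ∈ non, ∑ j ∈ Finset.range (N - (s.2 q).length),
              s.1 q p' * alive non L p' p j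
          = ∑ p' ∈ non, s.1 q p' *
              ∑ p ∈ non, ∑ j ∈ Finset.range (N - (s.2 q).length), alive non L p' p j := by
            simp only [Finset.mul_sum]
        _ ≤ ∑ p' ∈ non, s.1 q p' * 1 := Finset.sum_le_sum fun p' _ =>
            mul_le_mul_of_nonneg_left (ih (goodL_tail hL) p' _) ((goodL_head hL).1 q p')
        _ = ∑ p' ∈ non, s.1 q p' := by simp
        _ ≤ ∑ p', s.1 q p' := Finset.sum_le_sum_of_subset_of_nonneg (Finset.subset_univ _)
            (fun p' _ _ => (goodL_head hL).1 q p')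
        _ = 1 := (goodL_head hL).2 q
    · rw [Finset.sum_congr rfl fun p _ =>
        Finset.sum_congr rfl fun j _ => if_neg (fun hc => h3 hc.1)]
      simp

lemma pAccAux_append (acc non : Finset Q)
    (L₂ : List (Matrix Q Q ℝ × (Q → List (Fin 4)))) :
    ∀ (L₁ : List (Matrix Q Q ℝ × (Q → List (Fin 4)))) (q : Q),
      (q ∈ non ∨ L₁ ≠ []) → ∀ r : ℕ,
      pAccAux acc non (L₁ ++ L₂) q (List.replicate r 3) =
        pAccAux acc non L₁ q (List.replicate r 3) +
          ∑ p ∈ non, ∑ j ∈ Finset.range (r + 1),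
            alive non L₁ q p j * pAccAux acc non L₂ p (List.replicate (r - j) 3) := by
  intro L₁
  induction L₁ with
  | nil =>
    intro q hq r
    have hqn : q ∈ non := hq.resolve_right fun h => h rfl
    simp only [List.nil_append, pAccAux, alive]
    rw [zero_add]
    have h1 : ∀ p, (∑ j ∈ Finset.range (r+1),
        (if p = q ∧ j = 0 then (1:ℝ) else 0) * pAccAux acc non L₂ p (List.replicate (r - j) 3))
        = if p = q then pAccAux acc non L₂ p (List.replicate r 3) else 0 := by
      intro p
      by_cases hpq : p = q
      · rw [if_pos hpq]
        have hco : ∀ j ∈ Finset.range (r+1),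
            (if p = q ∧ j = 0 then (1:ℝ) else 0) * pAccAux acc non L₂ p (List.replicate (r - j) 3)
            = if j = 0 then pAccAux acc non L₂ p (List.replicate (r - j) 3) else 0 := by
          intro j _; by_cases hj : j = 0 <;> simp [hpq, hj]
        rw [Finset.sum_congr rfl hco,
          Finset.sum_ite_eq' (Finset.range (r+1)) 0
            (fun j => pAccAux acc non L₂ p (List.replicate (r - j) 3))]
        simp
      · rw [if_neg hpq]
        apply Finset.sum_eq_zero; intro j _
        rw [if_neg (fun hc => hpq hc.1), zero_mul]
    rw [Finset.sum_congr rfl fun p _ => h1 p, Finset.sum_ite_eq' non q _, if_pos hqn]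
  | cons s L ih =>
    intro q _ r
    by_cases hpre : s.2 q <+: List.replicate r 3
    · have h3 : s.2 q = List.replicate (s.2 q).length 3 :=
        List.eq_replicate_iff.mpr ⟨rfl, fun b hb => List.eq_of_mem_replicate (hpre.subset hb)⟩
      have hlr : (s.2 q).length ≤ r := by simpa using hpre.length_le
      have hdrop : (List.replicate r 3).drop (s.2 q).length
          = List.replicate (r - (s.2 q).length) (3 : Fin 4) := List.drop_replicate ..
      simp only [List.cons_append, List.append_eq, pAccAux, alive]
      rw [if_pos hpre, if_pos hpre, hdrop]
      have hrec : ∀ p ∈ non,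
          s.1 q p * pAccAux acc non (L ++ L₂) p (List.replicate (r - (s.2 q).length) 3)
          = s.1 q p * pAccAux acc non L p (List.replicate (r - (s.2 q).length) 3)
            + s.1 q p * ∑ p' ∈ non, ∑ j ∈ Finset.range (r - (s.2 q).length + 1),
                alive non L p p' j *
                  pAccAux acc non L₂ p' (List.replicate (r - (s.2 q).length - j) 3) := by
        intro p hp; rw [ih p (Or.inl hp) (r - (s.2 q).length), mul_add]
      rw [Finset.sum_congr rfl hrec, Finset.sum_add_distrib, ← add_assoc]
      congr 1
      symm
      calc ∑ p ∈ non, ∑ j ∈ Finset.range (r + 1),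
            (if s.2 q = List.replicate (s.2 q).length 3 ∧ (s.2 q).length ≤ j then
              ∑ p' ∈ non, s.1 q p' * alive non L p' p (j - (s.2 q).length) else 0) *
            pAccAux acc non L₂ p (List.replicate (r - j) 3)
          = ∑ p ∈ non, ∑ t ∈ Finset.range (r - (s.2 q).length + 1),
              (∑ p' ∈ non, s.1 q p' * alive non L p' p t) *
                pAccAux acc non L₂ p (List.replicate (r - (s.2 q).length - t) 3) := by
            refine Finset.sum_congr rfl fun p _ => ?_
            have hsh := sum_range_shift (fun t => (∑ p' ∈ non, s.1 q p' * alive non L p' p t) *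
              pAccAux acc non L₂ p (List.replicate (r - (s.2 q).length - t) 3))
              (s.2 q).length (r+1)
            rw [show r + 1 - (s.2 q).length = r - (s.2 q).length + 1 from by omega] at hsh
            rw [← hsh]
            refine Finset.sum_congr rfl fun j _ => ?_
            by_cases hlj : (s.2 q).length ≤ j
            · rw [if_pos ⟨h3, hlj⟩, if_pos hlj,
                show r - (s.2 q).length - (j - (s.2 q).length) = r - j from by omega]
            · rw [if_neg (fun hc => hlj hc.2), if_neg hlj, zero_mul]
        _ = ∑ p ∈ non, ∑ t ∈ Finset.range (r - (s.2 q).length + 1), ∑ p' ∈ non,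
              s.1 q p' * (alive non L p' p t *
                pAccAux acc non L₂ p (List.replicate (r - (s.2 q).length - t) 3)) := by
            refine Finset.sum_congr rfl fun p _ => Finset.sum_congr rfl fun t _ => ?_
            rw [Finset.sum_mul]
            exact Finset.sum_congr rfl fun p' _ => (mul_assoc _ _ _)
        _ = ∑ p' ∈ non, ∑ p ∈ non, ∑ t ∈ Finset.range (r - (s.2 q).length + 1),
              s.1 q p' * (alive non L p' p t *
                pAccAux acc non L₂ p (List.replicate (r - (s.2 q).length - t) 3)) := by
            rw [Finset.sum_congr rfl fun p (_ : p ∈ non) =>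
              (Finset.sum_comm (s := Finset.range (r - (s.2 q).length + 1)) (t := non)
                (f := fun t p' => s.1 q p' * (alive non L p' p t *
                  pAccAux acc non L₂ p (List.replicate (r - (s.2 q).length - t) 3)))),
              Finset.sum_comm]
        _ = ∑ p ∈ non, s.1 q p * ∑ p' ∈ non, ∑ j ∈ Finset.range (r - (s.2 q).length + 1),
              alive non L p p' j *
                pAccAux acc non L₂ p' (List.replicate (r - (s.2 q).length - j) 3) := by
            simp only [Finset.mul_sum]
    · simp only [List.cons_append, pAccAux, alive]
      rw [if_neg hpre, if_neg hpre, zero_add]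
      symm
      apply Finset.sum_eq_zero; intro p _
      apply Finset.sum_eq_zero; intro j hj
      rw [if_neg, zero_mul]
      rintro ⟨h3, hlj⟩
      apply hpre
      rw [h3]
      refine ⟨List.replicate (r - (s.2 q).length) 3, ?_⟩
      rw [← List.replicate_add]
      congr 1
      have hjr : j ≤ r := Nat.lt_succ_iff.mp (Finset.mem_range.mp hj)
      omega

lemma pAccAux_eq_zero_of_long (acc non : Finset Q) (C : ℕ) :
    ∀ (L : List (Matrix Q Q ℝ × (Q → List (Fin 4)))),
      (∀ s ∈ L, ∀ q, (s.2 q).length ≤ C) →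
      ∀ q (w : List (Fin 4)), C * L.length < w.length → pAccAux acc non L q w = 0 := by
  intro L
  induction L with
  | nil => intro _ q w h; simp [pAccAux]
  | cons s L ih =>
    intro hL q w hw
    have hlen : (s.2 q).length ≤ C := hL s List.mem_cons_self q
    have hmul : C * (s :: L).length = C * L.length + C := by
      simp [List.length_cons, Nat.mul_succ]
    rw [hmul] at hw
    simp only [pAccAux]
    split
    · have hne : ¬ w.drop (s.2 q).length = [] := by
        intro hdc
        have hld := congrArg List.length hdc
        rw [List.length_drop] at hld
        simp at hld
        omega
      rw [if_neg hne, mul_zero, zero_add]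
      apply Finset.sum_eq_zero; intro p _
      rw [ih (fun t ht q' => hL t (List.mem_cons_of_mem _ ht) q') p _ (by
        rw [List.length_drop]; omega), mul_zero]
    · rfl

end NoPfstAux

section NoPfstT

variable {Q : Type*} [Fintype Q] [DecidableEq Q]

/-- Input word `0^m 1^n 2^k`. -/
def vin (m n k : ℕ) : List (Fin 3) :=
  List.replicate m 0 ++ List.replicate n 1 ++ List.replicate k 2

lemma vin_mem_R₃ (m k : ℕ) (h : k ≠ m) :
    (vin m m k, List.replicate m (3 : Fin 4)) ∈ R₃ :=
  ⟨m, m, k, fun he => h he.symm, Or.inr rfl, rfl, rfl⟩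

lemma vin_not_mem_R₃ (m : ℕ) : (vin m m m, List.replicate m (3 : Fin 4)) ∉ R₃ := by
  rintro ⟨m', n', k', hnk, _, h1, h2⟩
  have hm : m' = m := by
    have hl := congrArg List.length h2
    simpa using hl.symm
  rw [hm] at h1
  have hn : n' = m := by
    have hc := congrArg (List.count 1) h1
    simp [vin, List.count_append, List.count_replicate] at hc
    omega
  have hk : k' = m := by
    have hc := congrArg (List.count 2) h1
    simp [vin, List.count_append, List.count_replicate] at hc
    omega
  exact hnk (by rw [hn, hk])

variable (T : PFST Q (Fin 3) (Fin 4))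

/-- The non-halting states. -/
def nonT : Finset Q := Finset.univ \ (T.acc ∪ T.rej)

lemma disjT : Disjoint T.acc (nonT T) := by
  rw [Finset.disjoint_left]
  intro a ha hn
  rw [nonT, Finset.mem_sdiff] at hn
  exact hn.2 (Finset.mem_union_left _ ha)

/-- Steps for `‡ 0^m 1^m`. -/
def L1 (m : ℕ) : List (Matrix Q Q ℝ × (Q → List (Fin 4))) :=
  (T.Vbeg, T.outBeg) :: (List.replicate m (T.V 0, T.out 0) ++ List.replicate m (T.V 1, T.out 1))

/-- Steps for `2^k $`. -/
def L2 (k : ℕ) : List (Matrix Q Q ℝ × (Q → List (Fin 4))) :=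
  List.replicate k (T.V 2, T.out 2) ++ [(T.Vend, T.outEnd)]

/-- A bound (≥ 1) on the lengths of outputs during the `2`-block and at the end marker. -/
def CB : ℕ :=
  ((Finset.univ.sup fun q => (T.out 2 q).length) ⊔
    (Finset.univ.sup fun q => (T.outEnd q).length)) + 1

lemma one_le_CB : 1 ≤ CB T := Nat.succ_le_succ (Nat.zero_le _)

lemma goodL1 (m : ℕ) : GoodL (L1 T m) := by
  intro s hs
  simp only [L1, List.mem_cons, List.mem_append, List.mem_replicate] at hs
  rcases hs with h | ⟨-, h⟩ | ⟨-, h⟩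
  · subst h; exact ⟨T.nonnegBeg, T.stochasticBeg⟩
  · subst h; exact ⟨T.nonneg 0, T.stochastic 0⟩
  · subst h; exact ⟨T.nonneg 1, T.stochastic 1⟩

lemma goodL2 (k : ℕ) : GoodL (L2 T k) := by
  intro s hs
  simp only [L2, List.mem_append, List.mem_replicate, List.mem_singleton] at hs
  rcases hs with ⟨-, h⟩ | h
  · subst h; exact ⟨T.nonneg 2, T.stochastic 2⟩
  · subst h; exact ⟨T.nonnegEnd, T.stochasticEnd⟩

lemma L2_len (k : ℕ) : (L2 T k).length = k + 1 := by simp [L2]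

lemma L2_out (k : ℕ) : ∀ s ∈ L2 T k, ∀ q, (s.2 q).length ≤ CB T := by
  intro s hs q
  simp only [L2, List.mem_append, List.mem_replicate, List.mem_singleton] at hs
  rcases hs with ⟨-, h⟩ | h
  · subst h
    show (T.out 2 q).length ≤ CB T
    refine le_trans (Finset.le_sup (f := fun q => (T.out 2 q).length) (Finset.mem_univ q)) ?_
    unfold CB
    exact le_sup_left.trans (Nat.le_succ _)
  · subst h
    show (T.outEnd q).length ≤ CB T
    refine le_trans (Finset.le_sup (f := fun q => (T.outEnd q).length) (Finset.mem_univ q)) ?_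
    unfold CB
    exact le_sup_right.trans (Nat.le_succ _)

/-- Probability of accepting with output `3^m` already within `‡ 0^m 1^m`. -/
def eT (m : ℕ) : ℝ := pAccAux T.acc (nonT T) (L1 T m) T.init (List.replicate m 3)

/-- Probability of accepting from state `p` reading `2^k $` with output exactly `3^r`. -/
def FT (k : ℕ) (p : Q) (r : ℕ) : ℝ :=
  pAccAux T.acc (nonT T) (L2 T k) p (List.replicate r 3)

/-- Probability of being in `p` after `‡ 0^m 1^m`, not halted, with `r` threes
still to be written. -/
def nuT (m : ℕ) (p : Q) (r : ℕ) : ℝ :=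
  if r ≤ m then alive (nonT T) (L1 T m) T.init p (m - r) else 0

lemma eT_nonneg (m : ℕ) : 0 ≤ eT T m :=
  pAccAux_nonneg _ _ _ (goodL1 T m) _ _

lemma eT_le_one (m : ℕ) : eT T m ≤ 1 :=
  pAccAux_le_one _ _ (disjT T) _ (goodL1 T m) _ _

lemma FT_nonneg (k : ℕ) (p : Q) (r : ℕ) : 0 ≤ FT T k p r :=
  pAccAux_nonneg _ _ _ (goodL2 T k) _ _

lemma FT_le_one (k : ℕ) (p : Q) (r : ℕ) : FT T k p r ≤ 1 :=
  pAccAux_le_one _ _ (disjT T) _ (goodL2 T k) _ _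

lemma nuT_nonneg (m : ℕ) (p : Q) (r : ℕ) : 0 ≤ nuT T m p r := by
  rw [nuT]; split
  · exact alive_nonneg _ _ (goodL1 T m) _ _ _
  · exact le_rfl

lemma nuT_le_one (m : ℕ) (p : Q) (r : ℕ) : nuT T m p r ≤ 1 := by
  rw [nuT]; split
  · exact alive_le_one _ _ (goodL1 T m) _ _ _
  · norm_num

lemma FT_zero (k : ℕ) (p : Q) (r : ℕ) (h : CB T * (k+1) < r) : FT T k p r = 0 := by
  apply pAccAux_eq_zero_of_long T.acc (nonT T) (CB T) (L2 T k) (L2_out T k) p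
  rw [L2_len, List.length_replicate]
  exact h

lemma steps_decomp (m k : ℕ) : T.steps (vin m m k) = L1 T m ++ L2 T k := by
  simp [PFST.steps, vin, L1, L2, List.map_append, List.map_replicate, List.append_assoc]

lemma nuT_reflect (m : ℕ) (p : Q) (g : ℕ → ℝ) :
    ∑ r ∈ Finset.range (m+1), nuT T m p r * g r
      = ∑ j ∈ Finset.range (m+1), alive (nonT T) (L1 T m) T.init p j * g (m - j) := by
  conv_lhs => rw [← Finset.sum_range_reflect (fun r => nuT T m p r * g r) (m+1)]
  apply Finset.sum_congr rfl
  intro j hj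
  have hjm : j ≤ m := Nat.lt_succ_iff.mp (Finset.mem_range.mp hj)
  rw [show m + 1 - 1 - j = m - j from by omega]
  simp only [nuT, if_pos (Nat.sub_le m j), show m - (m - j) = j from by omega]

lemma prob_decomp (m k : ℕ) :
    T.prob (vin m m k) (List.replicate m 3)
      = eT T m + ∑ p ∈ nonT T, ∑ r ∈ Finset.range (m+1), nuT T m p r * FT T k p r := by
  have h0 : T.prob (vin m m k) (List.replicate m 3)
      = pAccAux T.acc (nonT T) (T.steps (vin m m k)) T.init (List.replicate m 3) := rfl
  rw [h0, steps_decomp,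
    pAccAux_append T.acc (nonT T) (L2 T k) (L1 T m) T.init (Or.inr (by simp [L1])) m]
  congr 1
  apply Finset.sum_congr rfl
  intro p _
  rw [nuT_reflect T m p (fun r => FT T k p r)]
  rfl

lemma prob_decomp_trunc (m k : ℕ) (h : CB T * (k+1) ≤ m) :
    T.prob (vin m m k) (List.replicate m 3)
      = eT T m + ∑ p ∈ nonT T, ∑ r ∈ Finset.range (CB T * (k+1) + 1), nuT T m p r * FT T k p r := by
  rw [prob_decomp]
  congr 1
  apply Finset.sum_congr rfl
  intro p _
  symm
  apply Finset.sum_subset (Finset.range_subset_range.mpr (by omega))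
  intro r hr hnr
  have hlt : CB T * (k+1) < r := by
    rw [Finset.mem_range] at hr
    rw [Finset.mem_range] at hnr
    omega
  rw [FT_zero T k p r hlt, mul_zero]

lemma nuT_mass (m N : ℕ) : ∑ p ∈ nonT T, ∑ r ∈ Finset.range N, nuT T m p r ≤ 1 := by
  have key : ∀ p, ∑ r ∈ Finset.range N, nuT T m p r
      ≤ ∑ j ∈ Finset.range (m+1), alive (nonT T) (L1 T m) T.init p j := by
    intro p
    have heq : ∑ r ∈ Finset.range (m+1), nuT T m p r
        = ∑ j ∈ Finset.range (m+1), alive (nonT T) (L1 T m) T.init p j := by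
      have := nuT_reflect T m p (fun _ => (1:ℝ))
      simpa using this
    by_cases hN : N ≤ m + 1
    · rw [← heq]
      exact Finset.sum_le_sum_of_subset_of_nonneg (Finset.range_subset_range.mpr hN)
        (fun r _ _ => nuT_nonneg T m p r)
    · rw [← heq]
      refine le_of_eq (Finset.sum_subset (Finset.range_subset_range.mpr (by omega : m + 1 ≤ N))
        (fun r _ hr => ?_)).symm
      rw [nuT, if_neg]
      rw [Finset.mem_range] at hr
      omega
  calc ∑ p ∈ nonT T, ∑ r ∈ Finset.range N, nuT T m p r
      ≤ ∑ p ∈ nonT T, ∑ j ∈ Finset.range (m+1), alive (nonT T) (L1 T m) T.init p j :=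
        Finset.sum_le_sum fun p _ => key p
    _ ≤ 1 := alive_mass (nonT T) (L1 T m) (goodL1 T m) T.init (m+1)

end NoPfstT

/-- No probabilistic finite state transducer computes `R₃` with probability
bounded away from `1/2`. -/
theorem no_pfst_computes_R₃ (Q : Type) [Fintype Q] [DecidableEq Q]
    (T : PFST Q (Fin 3) (Fin 4)) (φ : ℝ) (hφ : 1/2 < φ) :
    ¬ T.Computes R₃ φ := by
  intro hC
  classical
  set non := nonT T with hnondef
  -- an ultrafilter extending `atTop`
  let U : Ultrafilter ℕ := Ultrafilter.of Filter.atTop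
  have hUle : (U : Filter ℕ) ≤ Filter.atTop := Ultrafilter.of_le _
  have hlim : ∀ f : ℕ → ℝ, (∀ m, f m ∈ Set.Icc (0:ℝ) 1) →
      ∃ x, x ∈ Set.Icc (0:ℝ) 1 ∧ Filter.Tendsto f (U : Filter ℕ) (nhds x) := by
    intro f hf
    obtain ⟨x, hx, hle⟩ := (isCompact_Icc (a := (0:ℝ)) (b := 1)).ultrafilter_le_nhds
      (U.map f) (by
        rw [Filter.le_principal_iff, Ultrafilter.coe_map, Filter.mem_map]
        exact Filter.univ_mem' hf)
    refine ⟨x, hx, ?_⟩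
    rwa [Ultrafilter.coe_map] at hle
  choose nus hnusI hnus using fun (p : Q) (r : ℕ) =>
    hlim (fun m => nuT T m p r) (fun m => ⟨nuT_nonneg T m p r, nuT_le_one T m p r⟩)
  obtain ⟨es, hesI, hes⟩ := hlim (fun m => eT T m) (fun m => ⟨eT_nonneg T m, eT_le_one T m⟩)
  -- partial sums of the limit measure
  set Sf : ℕ → ℝ := fun N => ∑ p ∈ non, ∑ r ∈ Finset.range N, nus p r with hSfdef
  have hSfle : ∀ N, Sf N ≤ 1 := by
    intro N
    have ht : Filter.Tendsto (fun m => ∑ p ∈ non, ∑ r ∈ Finset.range N, nuT T m p r)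
        (U : Filter ℕ) (nhds (Sf N)) :=
      tendsto_finset_sum _ fun p _ => tendsto_finset_sum _ fun r _ => hnus p r
    exact le_of_tendsto ht (Filter.Eventually.of_forall fun m => nuT_mass T m N)
  have hbdd : BddAbove (Set.range Sf) := ⟨1, by rintro x ⟨N, rfl⟩; exact hSfle N⟩
  set c := ⨆ N, Sf N with hcdef
  have hδ : (0:ℝ) < 2*φ - 1 := by linarith
  obtain ⟨N₀, hN₀⟩ : ∃ N₀, c - (2*φ-1) < Sf N₀ :=
    exists_lt_of_lt_ciSup (sub_lt_self c hδ)
  have hSfc : ∀ N, Sf N ≤ c := fun N => le_ciSup hbdd N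
  -- row inequality in the limit
  have hROW : ∀ k, φ ≤ es + ∑ p ∈ non, ∑ r ∈ Finset.range (CB T * (k+1) + 1),
      nus p r * FT T k p r := by
    intro k
    refine ge_of_tendsto (hes.add (tendsto_finset_sum _ fun p _ =>
      tendsto_finset_sum _ fun r _ => (hnus p r).mul_const (FT T k p r))) ?_
    have hev : ∀ᶠ m in Filter.atTop, max (k+1) (CB T * (k+1)) ≤ m :=
      Filter.eventually_ge_atTop _
    refine (hev.filter_mono hUle).mono ?_
    intro m hm
    have hkm : k ≠ m := by omega
    have h1 := (hC (vin m m k) (List.replicate m 3)).1 (vin_mem_R₃ m k hkm)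
    rwa [prob_decomp_trunc T m k (by omega)] at h1
  -- diagonal inequality (exact, for each m)
  have hDIAG : ∀ m, N₀ ≤ m + 1 →
      eT T m + ∑ p ∈ non, ∑ r ∈ Finset.range N₀, nuT T m p r * FT T m p r ≤ 1 - φ := by
    intro m hm
    have h1 := (hC (vin m m m) (List.replicate m 3)).2 (vin_not_mem_R₃ m)
    rw [prob_decomp T m m] at h1
    refine le_trans (add_le_add_right ?_ _) h1
    apply Finset.sum_le_sum; intro p _
    exact Finset.sum_le_sum_of_subset_of_nonneg (Finset.range_subset_range.mpr hm)
      (fun r _ _ => mul_nonneg (nuT_nonneg T m p r) (FT_nonneg T m p r))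
  -- the key eventual inequality
  have hKEY : ∀ᶠ m in (U : Filter ℕ), φ ≤ 1 - φ + (c - Sf N₀) +
      ((es - eT T m) + ∑ p ∈ non, ∑ r ∈ Finset.range N₀, |nus p r - nuT T m p r|) := by
    have hev : ∀ᶠ m in Filter.atTop, N₀ ≤ m + 1 := by
      filter_upwards [Filter.eventually_ge_atTop N₀] with m hm; omega
    refine (hev.filter_mono hUle).mono ?_
    intro m hm
    have hsub : Finset.range N₀ ⊆ Finset.range (CB T * (m+1) + 1) := by
      apply Finset.range_subset_range.mpr
      have h1 : m + 1 ≤ CB T * (m+1) := Nat.le_mul_of_pos_left _ (one_le_CB T)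
      omega
    -- split the big sum
    have hsplit : ∑ p ∈ non, ∑ r ∈ Finset.range (CB T * (m+1) + 1), nus p r * FT T m p r
        ≤ (∑ p ∈ non, ∑ r ∈ Finset.range N₀, nus p r * FT T m p r) + (c - Sf N₀) := by
      have h1 : ∀ p, ∑ r ∈ Finset.range (CB T * (m+1) + 1), nus p r * FT T m p r
          = (∑ r ∈ Finset.range (CB T * (m+1) + 1) \ Finset.range N₀, nus p r * FT T m p r)
            + ∑ r ∈ Finset.range N₀, nus p r * FT T m p r :=
        fun p => (Finset.sum_sdiff hsub).symm
      rw [Finset.sum_congr rfl fun p _ => h1 p, Finset.sum_add_distrib, add_comm]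
      apply add_le_add_right
      have h2 : ∑ p ∈ non, ∑ r ∈ Finset.range (CB T * (m+1) + 1) \ Finset.range N₀,
          nus p r * FT T m p r
          ≤ ∑ p ∈ non, ∑ r ∈ Finset.range (CB T * (m+1) + 1) \ Finset.range N₀, nus p r := by
        apply Finset.sum_le_sum; intro p _
        apply Finset.sum_le_sum; intro r _
        exact mul_le_of_le_one_right (hnusI p r).1 (FT_le_one T m p r)
      refine h2.trans ?_
      have h3 : ∑ p ∈ non, ∑ r ∈ Finset.range (CB T * (m+1) + 1) \ Finset.range N₀, nus p r
          = Sf (CB T * (m+1) + 1) - Sf N₀ := by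
        rw [hSfdef]
        simp only
        rw [← Finset.sum_sub_distrib]
        apply Finset.sum_congr rfl; intro p _
        rw [eq_sub_iff_add_eq, Finset.sum_sdiff hsub]
      rw [h3]
      have := hSfc (CB T * (m+1) + 1)
      linarith
    -- compare the head with the actual measure at time m
    have habs : ∑ p ∈ non, ∑ r ∈ Finset.range N₀, nus p r * FT T m p r
        ≤ (∑ p ∈ non, ∑ r ∈ Finset.range N₀, nuT T m p r * FT T m p r)
          + ∑ p ∈ non, ∑ r ∈ Finset.range N₀, |nus p r - nuT T m p r| := by
      rw [← Finset.sum_add_distrib]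
      apply Finset.sum_le_sum; intro p _
      rw [← Finset.sum_add_distrib]
      apply Finset.sum_le_sum; intro r _
      have hF0 := FT_nonneg T m p r
      have hF1 := FT_le_one T m p r
      have ha1 := le_abs_self (nus p r - nuT T m p r)
      have ha0 := abs_nonneg (nus p r - nuT T m p r)
      nlinarith
    have hdiag := hDIAG m hm
    have hrow := hROW m
    linarith
  -- pass to the limit along U
  have ht : Filter.Tendsto (fun m => 1 - φ + (c - Sf N₀) + ((es - eT T m) +
      ∑ p ∈ non, ∑ r ∈ Finset.range N₀, |nus p r - nuT T m p r|)) (U : Filter ℕ)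
      (nhds (1 - φ + (c - Sf N₀) + ((es - es) +
        ∑ p ∈ non, ∑ r ∈ Finset.range N₀, |nus p r - nus p r|))) := by
    refine Filter.Tendsto.add tendsto_const_nhds (Filter.Tendsto.add
      (tendsto_const_nhds.sub hes) (tendsto_finset_sum _ fun p _ =>
        tendsto_finset_sum _ fun r _ => ?_))
    exact (Filter.Tendsto.sub tendsto_const_nhds (hnus p r)).abs
  have hfin : φ ≤ 1 - φ + (c - Sf N₀) + ((es - es) +
      ∑ p ∈ non, ∑ r ∈ Finset.range N₀, |nus p r - nus p r|) := ge_of_tendsto ht hKEY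
  simp only [sub_self, abs_zero, Finset.sum_const_zero, add_zero] at hfin
  linarith
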